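/- The real Okubo algebra 𝒪 is flexible, and more precisely x*(y*x) = (x*y)*x = n(x)·y for all x, y ∈ 𝒪. -/

import Mathlib

open Matrix Complex

noncomputable section

/-- `3 × 3` complex matrices. -/
abbrev M3 : Type := Matrix (Fin 3) (Fin 3) ℂ

/-- The real Okubo algebra: `3 × 3` traceless Hermitian complex matrices. -/
def Okubo : Set M3 := {x | x.IsHermitian ∧ x.trace = 0}

/-- The constant `μ = (3 + i√3)/6`. -/
def okMu : ℂ := (3 + (Real.sqrt 3 : ℂ) * Complex.I) / 6

/-- The Okubo product `x*y = μ·(xy) + μ̄·(yx) − (1/3)Tr(xy)·Id`. -/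
def omul (x y : M3) : M3 :=
  okMu • (x * y) + (starRingEnd ℂ) okMu • (y * x) - ((1 / 3 : ℂ) * (x * y).trace) • (1 : M3)

/-- The Okubic norm `n(x) = (1/6)Tr(x²)` (real-valued on Hermitian matrices). -/
def onorm (x : M3) : ℝ := (1 / 6) * ((x * x).trace).re

/-- The polar form `⟨x,y⟩ = n(x+y) − n(x) − n(y)` of the Okubic norm. -/
def opolar (x y : M3) : ℝ := onorm (x + y) - onorm x - onorm y

/-!
With `μ + μ̄ = 1` and `μ μ̄ = 1/3` (hence `μ² + μ̄² = 1/3`), expanding either triple product of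
traceless `x, y` and cycling traces gives the same symmetric expression
`(x*y)*x = x*(y*x) = (1/3)(x²y + xyx + yx² − Tr(xy) x − Tr(x²y) 1)`.
By the polarized Cayley–Hamilton identity for `3 × 3` traceless matrices,
`x²y + xyx + yx² = Tr(xy) x + (Tr(x²)/2) y + Tr(x²y) 1`, this collapses to `(Tr(x²)/6) y = n(x) y`.
-/

lemma conj_okMu : starRingEnd ℂ okMu = (3 - (Real.sqrt 3 : ℂ) * Complex.I) / 6 := by
  simp only [okMu, map_div₀, map_add, map_mul, map_ofNat, Complex.conj_I, Complex.conj_ofReal]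
  ring

lemma okMu_add_conj : okMu + starRingEnd ℂ okMu = 1 := by
  rw [conj_okMu, okMu]; ring

lemma okMu_mul_conj : okMu * starRingEnd ℂ okMu = 1 / 3 := by
  have hsqrt3 : ((Real.sqrt 3 : ℝ) : ℂ) ^ 2 = 3 := by
    norm_cast; rw [Real.sq_sqrt]; norm_num
  rw [conj_okMu, okMu]
  linear_combination (-Complex.I ^ 2 / 36) * hsqrt3 + (-1 / 12 : ℂ) * Complex.I_sq

lemma okMu_sq_add_conj_sq : okMu ^ 2 + starRingEnd ℂ okMu ^ 2 = 1 / 3 := by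
  linear_combination (okMu + starRingEnd ℂ okMu + 1) * okMu_add_conj - 2 * okMu_mul_conj

/-- Polarization of the Cayley–Hamilton identity `x³ = (Tr(x²)/2) x + Tr(x³)/3` of a traceless
`3 × 3` matrix, doubled so as to avoid dividing by 2. -/
theorem Matrix.cayleyHamilton_polarized_fin_three {R : Type*} [CommRing R]
    {x y : Matrix (Fin 3) (Fin 3) R} (hx : x.trace = 0) (hy : y.trace = 0) :
    (2 : R) • (x * x * y + x * y * x + y * (x * x))
      = (2 * (x * y).trace) • x + (x * x).trace • y + (2 * (x * x * y).trace) • 1 := by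
  have diag_two : ∀ z : Matrix (Fin 3) (Fin 3) R, z.trace = 0 → z 2 2 = -z 0 0 - z 1 1 := by
    intro z hz
    simp only [Matrix.trace, Fin.sum_univ_three, Matrix.diag] at hz
    linear_combination hz
  ext i j
  fin_cases i <;> fin_cases j <;>
    simp [Matrix.mul_apply, Matrix.trace, Fin.sum_univ_three,
      diag_two x hx, diag_two y hy] <;> ring

section OkuboProduct

variable {x y : M3}

lemma omul_omul_self (hx : x.trace = 0) :
    omul (omul x y) x = (1 / 3 : ℂ) •
      (x * x * y + x * y * x + y * (x * x) - (x * y).trace • x - (x * x * y).trace • 1) := by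
  have hxyx : (x * (y * x)).trace = (x * x * y).trace := by
    rw [← Matrix.mul_assoc, Matrix.trace_mul_cycle]
  have hyxx : (y * (x * x)).trace = (x * x * y).trace := Matrix.trace_mul_comm _ _
  simp only [omul, Matrix.sub_mul, Matrix.add_mul, Matrix.mul_sub, Matrix.mul_add,
    smul_mul_assoc, mul_smul_comm, Matrix.one_mul, Matrix.mul_one, trace_smul, trace_sub,
    trace_add, smul_eq_mul, hx, mul_zero, Matrix.mul_assoc, hxyx, hyxx]
  linear_combination (norm := module)
    okMu_sq_add_conj_sq • (x * (y * x)) + okMu_mul_conj • (x * (x * y) + y * (x * x))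
      - okMu_add_conj • ((1 / 3 * (x * y).trace) • x + (1 / 3 * (x * (x * y)).trace) • 1)

lemma omul_self_omul (hx : x.trace = 0) :
    omul x (omul y x) = omul (omul x y) x := by
  have hyx : (y * x).trace = (x * y).trace := Matrix.trace_mul_comm _ _
  have hxyx : (x * (y * x)).trace = (x * (x * y)).trace := by
    rw [← Matrix.mul_assoc, Matrix.trace_mul_cycle, Matrix.mul_assoc]
  rw [omul_omul_self hx]
  simp only [omul, Matrix.sub_mul, Matrix.add_mul, Matrix.mul_sub, Matrix.mul_add,
    smul_mul_assoc, mul_smul_comm, Matrix.one_mul, Matrix.mul_one, trace_smul, trace_sub,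
    trace_add, smul_eq_mul, hx, mul_zero, Matrix.mul_assoc, hyx, hxyx]
  linear_combination (norm := module)
    okMu_sq_add_conj_sq • (x * (y * x)) + okMu_mul_conj • (x * (x * y) + y * (x * x))
      - okMu_add_conj • ((1 / 3 * (x * y).trace) • x + (1 / 3 * (x * (x * y)).trace) • 1)

lemma ofReal_onorm (hx : x.IsHermitian) : (onorm x : ℂ) = (x * x).trace / 6 := by
  have htrace : ((x * x).trace.re : ℂ) = (x * x).trace := by
    rw [← Complex.conj_eq_iff_re, ← Complex.star_def, ← Matrix.trace_conjTranspose, ← pow_two,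
      (hx.pow 2).eq]
  rw [onorm, Complex.ofReal_mul, htrace]
  push_cast
  ring

end OkuboProduct

/-- The real Okubo algebra is flexible, and more precisely
`x*(y*x) = (x*y)*x = n(x) • y` for all `x, y ∈ 𝒪`. -/
theorem okubo_paper_stmt6 :
    ∀ x ∈ Okubo, ∀ y ∈ Okubo,
      omul x (omul y x) = omul (omul x y) x ∧ omul (omul x y) x = onorm x • y := by
  rintro x ⟨hx_herm, hx_trace⟩ y ⟨-, hy_trace⟩
  refine ⟨omul_self_omul hx_trace, ?_⟩
  rw [omul_omul_self hx_trace, ← Complex.coe_smul, ofReal_onorm hx_herm]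
  linear_combination (norm := module)
    (1 / 6 : ℂ) • Matrix.cayleyHamilton_polarized_fin_three hx_trace hy_trace

end
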